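/- arXiv:1008.2988 — 5 statements merged into one kernel-verified Lean document; each statement's English description precedes it below -/
import Mathlib

section
/- There exists a countably infinite set P of points in the real plane such that P contains no 4 collinear points and no 3 points of P are pairwise visible (where distinct points v, w are visible with respect to P if no point of P lies in the open segment between v and w). -/
/-!
Label every point by a vertex of the 5-cycle `C₅` and keep the invariant that a point lying
strictly between two others is adjacent in `C₅` to both of their labels. Start from the points
`(k, k²)`, no three collinear, all labelled `0`. If two points with non-adjacent labels see each
other, no other point lies on their line: by the invariant it could lie neither inside nor
outside the segment. So the countably many lines through other pairs of points meet the segment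
in countably many points, and we may add a point of the segment off all of them, labelled by a
common neighbour of the two labels; this keeps the invariant and creates no four collinear
points. Doing this for all pairs, then for all pairs of the result, and so on, gives a countable
set in which visible points have adjacent labels, so three pairwise visible points would form a
triangle in `C₅`.
-/

/-- `v` and `w` are visible with respect to `P`: they are distinct and no point of `P`
lies in the open segment between them. -/
def Visible (P : Set (ℝ × ℝ)) (v w : ℝ × ℝ) : Prop :=
  v ≠ w ∧ ∀ p ∈ P, p ∉ openSegment ℝ v w

/-- `P` contains no 4 collinear points. -/
def No4Collinear (P : Set (ℝ × ℝ)) : Prop :=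
  ∀ a ∈ P, ∀ b ∈ P, ∀ c ∈ P, ∀ d ∈ P,
    a ≠ b → a ≠ c → a ≠ d → b ≠ c → b ≠ d → c ≠ d →
    ¬ Collinear ℝ ({a, b, c, d} : Set (ℝ × ℝ))

open Set SimpleGraph

lemma exists_seq_of_forall_exists {α : Type*} {p : α → Prop} (r : ℕ → α → α → Prop) {a : α}
    (ha : p a) (h : ∀ n x, p x → ∃ y, p y ∧ r n x y) :
    ∃ f : ℕ → α, f 0 = a ∧ ∀ n, p (f n) ∧ r n (f n) (f (n + 1)) := by
  choose g hg using fun n (x : Subtype p) ↦ h n x x.2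
  let f : ℕ → Subtype p := fun n ↦ Nat.rec ⟨a, ha⟩ (fun n x ↦ ⟨g n x, (hg n x).1⟩) n
  exact ⟨fun n ↦ (f n).1, rfl, fun n ↦ ⟨(f n).2, (hg n (f n)).2⟩⟩

lemma subsingleton_affineSpan_pair_inter {k V P : Type*} [DivisionRing k] [AddCommGroup V]
    [Module k V] [AddTorsor V P] {p q u v : P} (h : line[k, p, q] ≠ line[k, u, v]) :
    ((line[k, p, q] : Set P) ∩ line[k, u, v]).Subsingleton := by
  rintro x ⟨hxp, hxu⟩ y ⟨hyp, hyu⟩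
  by_contra hxy
  exact h ((affineSpan_pair_eq_of_mem_of_mem_of_ne hxp hyp hxy).symm.trans
    (affineSpan_pair_eq_of_mem_of_mem_of_ne hxu hyu hxy))

section Geometry

variable {V : Type*} [AddCommGroup V] [Module ℝ V]

lemma mem_openSegment_iff_sbtw {x y z : V} (hxz : x ≠ z) :
    y ∈ openSegment ℝ x z ↔ Sbtw ℝ x y z := by
  rw [openSegment_eq_image_lineMap, sbtw_iff_mem_image_Ioo_and_ne, and_iff_left hxz]

lemma not_countable_openSegment {x y : V} (hxy : x ≠ y) : ¬ (openSegment ℝ x y).Countable := by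
  rw [openSegment_eq_image_lineMap]
  intro h
  have hIoo := (h.preimage (AffineMap.lineMap_injective ℝ hxy)).mono (subset_preimage_image _ _)
  norm_num at hIoo

lemma exists_sbtw_forall_collinear {T : Set V} (hT : T.Countable) {u v : V} (huv : u ≠ v)
    (hT_line : ∀ w ∈ T, w ∈ line[ℝ, u, v] → w = u ∨ w = v) :
    ∃ x, Sbtw ℝ u x v ∧ ∀ p ∈ T, ∀ q ∈ T, p ≠ q → Collinear ℝ {p, q, x} →
      p ∈ ({u, v} : Set V) ∧ q ∈ ({u, v} : Set V) := by
  set crossings := ⋃ p ∈ T, ⋃ q ∈ T, ⋃ (_ : line[ℝ, p, q] ≠ line[ℝ, u, v]),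
    (line[ℝ, p, q] : Set V) ∩ line[ℝ, u, v]
  have hcrossings : crossings.Countable := hT.biUnion fun p _ ↦ hT.biUnion fun q _ ↦
    countable_iUnion fun h ↦ (subsingleton_affineSpan_pair_inter h).countable
  obtain ⟨x, hx, hx_crossings⟩ :=
    not_subset.1 fun h ↦ not_countable_openSegment huv (hcrossings.mono h)
  have hsbtw := (mem_openSegment_iff_sbtw huv).1 hx
  refine ⟨x, hsbtw, fun p hp q hq hpq hcol ↦ ?_⟩
  have hline : line[ℝ, p, q] = line[ℝ, u, v] := by
    by_contra hne
    exact hx_crossings (mem_biUnion hp (mem_biUnion hq (mem_iUnion_of_mem hne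
      ⟨hcol.mem_affineSpan_of_mem_of_ne (by simp) (by simp) (by simp) hpq,
        hsbtw.wbtw.mem_affineSpan⟩)))
  exact ⟨hT_line p hp (hline ▸ left_mem_affineSpan_pair ℝ p q),
    hT_line q hq (hline ▸ right_mem_affineSpan_pair ℝ p q)⟩

end Geometry

def parabola (t : ℝ) : ℝ × ℝ := (t, t ^ 2)

lemma parabola_injective : Function.Injective parabola :=
  fun _ _ h ↦ congrArg Prod.fst h

lemma not_collinear_parabola {a b c : ℝ} (hab : a ≠ b) (hac : a ≠ c) (hbc : b ≠ c) :
    ¬ Collinear ℝ {parabola a, parabola b, parabola c} := by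
  intro h
  obtain ⟨w, hw⟩ := (collinear_iff_of_mem (mem_insert _ _)).1 h
  obtain ⟨s, hs⟩ := hw (parabola b) (by simp)
  obtain ⟨t, ht⟩ := hw (parabola c) (by simp)
  simp only [parabola, Prod.ext_iff, vadd_eq_add, Prod.fst_add, Prod.snd_add, Prod.smul_fst,
    Prod.smul_snd, smul_eq_mul] at hs ht
  -- the Vandermonde determinant of `a, b, c` vanishes
  have : (b - a) * (c - a) * (c - b) = 0 := by
    linear_combination (b - a) * ht.2 + t * w.2 * hs.1 - (c - a) * hs.2 - s * w.2 * ht.1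
  simp [sub_eq_zero, hab.symm, hac.symm, hbc.symm] at this

lemma cycleGraph_five_not_triangle {i j k : Fin 5} :
    (cycleGraph 5).Adj i j → (cycleGraph 5).Adj j k → (cycleGraph 5).Adj i k → False := by
  revert i j k; decide

lemma cycleGraph_five_exists_adj_adj {i j : Fin 5} (h : ¬ (cycleGraph 5).Adj i j) :
    ∃ k, (cycleGraph 5).Adj k i ∧ (cycleGraph 5).Adj k j := by
  revert i j; decide

lemma No4Collinear.insert {P : Set (ℝ × ℝ)} {x : ℝ × ℝ} (hP : No4Collinear P)
    (hx : ∀ p ∈ P, ∀ q ∈ P, ∀ r ∈ P, p ≠ q → p ≠ r → q ≠ r → ¬ Collinear ℝ {x, p, q, r}) :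
    No4Collinear (insert x P) := by
  intro a ha b hb c hc d hd hab hac had hbc hbd hcd hcol
  rcases ha with rfl | ha
  · exact hx b (hb.resolve_left hab.symm) c (hc.resolve_left hac.symm) d
      (hd.resolve_left had.symm) hbc hbd hcd hcol
  rcases hb with rfl | hb
  · exact hx a ha c (hc.resolve_left hbc.symm) d (hd.resolve_left hbd.symm) hac had hcd
      (hcol.subset (by simp [insert_subset_iff]))
  rcases hc with rfl | hc
  · exact hx a ha b hb d (hd.resolve_left hcd.symm) hab had hbd
      (hcol.subset (by simp [insert_subset_iff]))
  rcases hd with rfl | hd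
  · exact hx a ha b hb c hc hab hac hbc
      (hcol.subset (by simp [insert_subset_iff]))
  exact hP a ha b hb c hc d hd hab hac had hbc hbd hcd hcol

structure Admissible (S : Set ((ℝ × ℝ) × Fin 5)) : Prop where
  countable : S.Countable
  injOn_fst : InjOn Prod.fst S
  adj_of_sbtw : ∀ a ∈ S, ∀ b ∈ S, ∀ c ∈ S, Sbtw ℝ a.1 c.1 b.1 →
    (cycleGraph 5).Adj c.2 a.2 ∧ (cycleGraph 5).Adj c.2 b.2
  no4Collinear : No4Collinear (Prod.fst '' S)

def Settled (S : Set ((ℝ × ℝ) × Fin 5)) (u v : (ℝ × ℝ) × Fin 5) : Prop :=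
  u.1 ≠ v.1 → ¬ (cycleGraph 5).Adj u.2 v.2 → ∃ w ∈ S, Sbtw ℝ u.1 w.1 v.1

section Settled

variable {S T : Set ((ℝ × ℝ) × Fin 5)} {u v : (ℝ × ℝ) × Fin 5}

lemma Settled.mono (h : Settled S u v) (hST : S ⊆ T) : Settled T u v :=
  fun huv hadj ↦ (h huv hadj).imp fun _ ⟨hw, hsbtw⟩ ↦ ⟨hST hw, hsbtw⟩

lemma Settled.adj_of_visible (h : Settled S u v) (hvis : Visible (Prod.fst '' S) u.1 v.1) :
    (cycleGraph 5).Adj u.2 v.2 := by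
  by_contra hadj
  obtain ⟨w, hw, hsbtw⟩ := h hvis.1 hadj
  exact hvis.2 w.1 (mem_image_of_mem _ hw) ((mem_openSegment_iff_sbtw hvis.1).2 hsbtw)

end Settled

namespace Admissible

variable {S : Set ((ℝ × ℝ) × Fin 5)} {u v : (ℝ × ℝ) × Fin 5}

lemma eq_or_eq_of_mem_affineSpan_pair (hS : Admissible S) (hu : u ∈ S) (hv : v ∈ S)
    (huv : u.1 ≠ v.1) (hadj : ¬ (cycleGraph 5).Adj u.2 v.2) (hvis : ∀ w ∈ S, ¬ Sbtw ℝ u.1 w.1 v.1) :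
    ∀ p ∈ Prod.fst '' S, p ∈ line[ℝ, u.1, v.1] → p = u.1 ∨ p = v.1 := by
  rintro _ ⟨w, hw, rfl⟩ hwl
  by_contra! ⟨hwu, hwv⟩
  rcases (collinear_insert_of_mem_affineSpan_pair hwl).wbtw_or_wbtw_or_wbtw with h | h | h
  · exact hadj (hS.adj_of_sbtw w hw v hv u hu ⟨h, hwu.symm, huv⟩).2
  · exact hadj (hS.adj_of_sbtw u hu w hw v hv ⟨h, huv.symm, hwv.symm⟩).1.symm
  · exact hvis w hw ⟨h.symm, hwu, hwv⟩

lemma adj_of_sbtw_insert {x : ℝ × ℝ} {k : Fin 5} (hS : Admissible S) (hu : u ∈ S) (hv : v ∈ S)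
    (hx : Sbtw ℝ u.1 x v.1)
    (hx_line : ∀ p ∈ Prod.fst '' S, ∀ q ∈ Prod.fst '' S, p ≠ q → Collinear ℝ {p, q, x} →
      p ∈ ({u.1, v.1} : Set (ℝ × ℝ)) ∧ q ∈ ({u.1, v.1} : Set (ℝ × ℝ)))
    (hk : (cycleGraph 5).Adj k u.2 ∧ (cycleGraph 5).Adj k v.2) :
    ∀ a ∈ insert (x, k) S, ∀ b ∈ insert (x, k) S, ∀ c ∈ insert (x, k) S, Sbtw ℝ a.1 c.1 b.1 →
      (cycleGraph 5).Adj c.2 a.2 ∧ (cycleGraph 5).Adj c.2 b.2 := by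
  have new_not_end : ∀ b ∈ S, ∀ c ∈ S, ¬ Sbtw ℝ x c.1 b.1 := by
    intro b hb c hc h
    have hcol := h.wbtw.collinear
    rw [insert_comm, pair_comm] at hcol
    obtain ⟨hc', hb'⟩ := hx_line c.1 (mem_image_of_mem _ hc) b.1 (mem_image_of_mem _ hb)
      h.ne_right hcol
    rcases hc' with hc' | hc' <;> rcases hb' with hb' | hb' <;> rw [hc', hb'] at h
    · exact h.ne_right rfl
    · exact hx.not_swap_left h.wbtw
    · exact hx.symm.not_swap_left h.wbtw
    · exact h.ne_right rfl
  have new_adj : ∀ a ∈ S, a.1 ∈ ({u.1, v.1} : Set (ℝ × ℝ)) → (cycleGraph 5).Adj k a.2 := by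
    rintro a ha (h | h)
    · exact hS.injOn_fst ha hu h ▸ hk.1
    · exact hS.injOn_fst ha hv h ▸ hk.2
  rintro a (rfl | ha) b (rfl | hb) c (rfl | hc) h
  · exact (h.ne_left rfl).elim
  · exact (h.left_ne_right rfl).elim
  · exact (h.ne_left rfl).elim
  · exact absurd h (new_not_end b hb c hc)
  · exact (h.ne_right rfl).elim
  · exact absurd h.symm (new_not_end a ha c hc)
  · have hcol := h.wbtw.collinear
    rw [pair_comm] at hcol
    obtain ⟨ha', hb'⟩ := hx_line a.1 (mem_image_of_mem _ ha) b.1 (mem_image_of_mem _ hb)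
      h.left_ne_right hcol
    exact ⟨new_adj a ha ha', new_adj b hb hb'⟩
  · exact hS.adj_of_sbtw a ha b hb c hc h

lemma insert_blocker {x : ℝ × ℝ} {k : Fin 5} (hS : Admissible S) (hu : u ∈ S) (hv : v ∈ S)
    (hvis : ∀ w ∈ S, ¬ Sbtw ℝ u.1 w.1 v.1) (hx : Sbtw ℝ u.1 x v.1)
    (hx_line : ∀ p ∈ Prod.fst '' S, ∀ q ∈ Prod.fst '' S, p ≠ q → Collinear ℝ {p, q, x} →
      p ∈ ({u.1, v.1} : Set (ℝ × ℝ)) ∧ q ∈ ({u.1, v.1} : Set (ℝ × ℝ)))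
    (hk : (cycleGraph 5).Adj k u.2 ∧ (cycleGraph 5).Adj k v.2) :
    Admissible (insert (x, k) S) where
  countable := hS.countable.insert _
  injOn_fst := (injOn_insert fun h ↦ hvis _ h hx).2
    ⟨hS.injOn_fst, fun ⟨w, hw, hwx⟩ ↦ hvis w hw (hwx ▸ hx)⟩
  adj_of_sbtw := hS.adj_of_sbtw_insert hu hv hx hx_line hk
  no4Collinear := by
    rw [image_insert_eq]
    refine hS.no4Collinear.insert fun p hp q hq r hr hpq hpr hqr hcol ↦ ?_
    obtain ⟨hp', hq'⟩ := hx_line p hp q hq hpq (hcol.subset (by simp [insert_subset_iff]))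
    have hr' := (hx_line p hp r hr hpr (hcol.subset (by simp [insert_subset_iff]))).2
    -- `p`, `q`, `r` would be three distinct points among `u.1`, `v.1`
    simp only [mem_insert_iff, mem_singleton_iff] at hp' hq' hr'
    grind

lemma exists_settled (hS : Admissible S) (hu : u ∈ S) (hv : v ∈ S) :
    ∃ S', S ⊆ S' ∧ Admissible S' ∧ Settled S' u v := by
  by_cases h : Settled S u v
  · exact ⟨S, subset_rfl, hS, h⟩
  unfold Settled at h
  push Not at h
  obtain ⟨huv, hadj, hvis⟩ := h
  obtain ⟨x, hx, hx_line⟩ := exists_sbtw_forall_collinear (hS.countable.image Prod.fst) huv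
    (hS.eq_or_eq_of_mem_affineSpan_pair hu hv huv hadj hvis)
  obtain ⟨k, hk⟩ := cycleGraph_five_exists_adj_adj hadj
  exact ⟨insert (x, k) S, subset_insert _ _, hS.insert_blocker hu hv hvis hx hx_line hk,
    fun _ _ ↦ ⟨(x, k), mem_insert _ _, hx⟩⟩

lemma iUnion {T : ℕ → Set ((ℝ × ℝ) × Fin 5)} (hT : Monotone T) (h : ∀ n, Admissible (T n)) :
    Admissible (⋃ n, T n) := by
  classical
  have stage : ∀ s : Finset ((ℝ × ℝ) × Fin 5), ↑s ⊆ ⋃ n, T n → ∃ n, ↑s ⊆ T n :=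
    fun s hs ↦ hT.directed_le.exists_mem_subset_of_finset_subset_biUnion hs
  refine ⟨countable_iUnion fun n ↦ (h n).countable, ?_, ?_, ?_⟩
  · intro a ha b hb hab
    obtain ⟨n, hn⟩ := stage {a, b} (by simp [insert_subset_iff, ha, hb])
    exact (h n).injOn_fst (hn (by simp)) (hn (by simp)) hab
  · intro a ha b hb c hc hsbtw
    obtain ⟨n, hn⟩ := stage {a, b, c} (by simp [insert_subset_iff, ha, hb, hc])
    exact (h n).adj_of_sbtw a (hn (by simp)) b (hn (by simp)) c (hn (by simp)) hsbtw
  · rintro _ ⟨a, ha, rfl⟩ _ ⟨b, hb, rfl⟩ _ ⟨c, hc, rfl⟩ _ ⟨d, hd, rfl⟩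
    obtain ⟨n, hn⟩ := stage {a, b, c, d} (by simp [insert_subset_iff, ha, hb, hc, hd])
    exact (h n).no4Collinear _ (mem_image_of_mem _ (hn (by simp))) _
      (mem_image_of_mem _ (hn (by simp))) _ (mem_image_of_mem _ (hn (by simp))) _
      (mem_image_of_mem _ (hn (by simp)))

lemma exists_settled_forall (hS : Admissible S) :
    ∃ S', S ⊆ S' ∧ Admissible S' ∧ ∀ u ∈ S, ∀ v ∈ S, Settled S' u v := by
  obtain ⟨e, he⟩ := countable_iff_exists_subset_range.1 (hS.countable.prod hS.countable)
  obtain ⟨T, hT0, hT⟩ := exists_seq_of_forall_exists (p := fun T ↦ Admissible T ∧ S ⊆ T)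
    (fun n T T' ↦ T ⊆ T' ∧ (e n ∈ S ×ˢ S → Settled T' (e n).1 (e n).2)) ⟨hS, subset_rfl⟩
    fun n T ⟨hT, hST⟩ ↦ by
      by_cases hn : e n ∈ S ×ˢ S
      · obtain ⟨T', hTT', hT', hset⟩ := hT.exists_settled (hST hn.1) (hST hn.2)
        exact ⟨T', ⟨hT', hST.trans hTT'⟩, hTT', fun _ ↦ hset⟩
      · exact ⟨T, ⟨hT, hST⟩, subset_rfl, fun h ↦ absurd h hn⟩
  have hmono : Monotone T := monotone_nat_of_le_succ fun n ↦ (hT n).2.1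
  refine ⟨⋃ n, T n, hT0 ▸ subset_iUnion T 0, iUnion hmono fun n ↦ (hT n).1.1,
    fun u hu v hv ↦ ?_⟩
  obtain ⟨n, hn⟩ := he (mk_mem_prod hu hv)
  have hset := (hT n).2.2 (hn ▸ mk_mem_prod hu hv)
  rw [hn] at hset
  exact hset.mono (subset_iUnion T (n + 1))

lemma exists_superset_forall_settled (hS : Admissible S) :
    ∃ S', S ⊆ S' ∧ Admissible S' ∧ ∀ u ∈ S', ∀ v ∈ S', Settled S' u v := by
  obtain ⟨T, hT0, hT⟩ := exists_seq_of_forall_exists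
    (fun _ T T' ↦ T ⊆ T' ∧ ∀ u ∈ T, ∀ v ∈ T, Settled T' u v) hS
    fun _ T hT ↦ by
      obtain ⟨T', hTT', hT', hset⟩ := hT.exists_settled_forall
      exact ⟨T', hT', hTT', hset⟩
  have hmono : Monotone T := monotone_nat_of_le_succ fun n ↦ (hT n).2.1
  refine ⟨⋃ n, T n, hT0 ▸ subset_iUnion T 0, iUnion hmono fun n ↦ (hT n).1,
    fun u hu v hv ↦ ?_⟩
  obtain ⟨i, hi⟩ := mem_iUnion.1 hu
  obtain ⟨j, hj⟩ := mem_iUnion.1 hv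
  exact ((hT (max i j)).2.2 u (hmono (le_max_left i j) hi) v (hmono (le_max_right i j) hj)).mono
    (subset_iUnion T _)

end Admissible

def parabolaSeeds : Set ((ℝ × ℝ) × Fin 5) := range fun k : ℕ ↦ (parabola k, 0)

lemma admissible_parabolaSeeds : Admissible parabolaSeeds := by
  have hne {i j : ℕ} (h : parabola i ≠ parabola j) : (i : ℝ) ≠ j := fun e ↦ h (congrArg _ e)
  refine ⟨countable_range _, ?_, ?_, ?_⟩
  · rintro _ ⟨k, rfl⟩ _ ⟨l, rfl⟩ h
    rw [Nat.cast_injective (parabola_injective h)]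
  · rintro _ ⟨k, rfl⟩ _ ⟨l, rfl⟩ _ ⟨m, rfl⟩ h
    exact absurd h.wbtw.collinear
      (not_collinear_parabola (hne h.ne_left.symm) (hne h.left_ne_right) (hne h.ne_right))
  · rintro _ ⟨_, ⟨k, rfl⟩, rfl⟩ _ ⟨_, ⟨l, rfl⟩, rfl⟩ _ ⟨_, ⟨m, rfl⟩, rfl⟩ _ ⟨_, ⟨n, rfl⟩, rfl⟩
      hkl hkm - hlm - - hcol
    exact not_collinear_parabola (hne hkl) (hne hkm) (hne hlm)
      (hcol.subset (by simp [insert_subset_iff]))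

lemma infinite_fst_parabolaSeeds : (Prod.fst '' parabolaSeeds).Infinite := by
  rw [parabolaSeeds, ← range_comp]
  exact infinite_range_of_injective (parabola_injective.comp Nat.cast_injective)

theorem stmt0 :
    ∃ P : Set (ℝ × ℝ), P.Countable ∧ P.Infinite ∧ No4Collinear P ∧
      ¬ ∃ a ∈ P, ∃ b ∈ P, ∃ c ∈ P,
        Visible P a b ∧ Visible P a c ∧ Visible P b c := by
  obtain ⟨S, hseeds, hS, hset⟩ := admissible_parabolaSeeds.exists_superset_forall_settled
  refine ⟨Prod.fst '' S, hS.countable.image _, infinite_fst_parabolaSeeds.mono (image_mono hseeds),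
    hS.no4Collinear, ?_⟩
  rintro ⟨_, ⟨a, ha, rfl⟩, _, ⟨b, hb, rfl⟩, _, ⟨c, hc, rfl⟩, hab, hac, hbc⟩
  exact cycleGraph_five_not_triangle ((hset a ha b hb).adj_of_visible hab)
    ((hset b hb c hc).adj_of_visible hbc) ((hset a ha c hc).adj_of_visible hac)
end

section
/- Sylvester–Gallai theorem: every finite set of points in ℝ², not all collinear, has a line passing through exactly two of the points. -/
open AffineMap

theorem exists_not_collinear_triple {k V P : Type*} [DivisionRing k] [AddCommGroup V]
    [Module k V] [AddTorsor V P] {S : Set P} (hS : ¬ Collinear k S) :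
    ∃ a ∈ S, ∃ b ∈ S, ∃ c ∈ S, ¬ Collinear k ({a, b, c} : Set P) := by
  obtain ⟨a, ha⟩ : S.Nonempty :=
    Set.nonempty_iff_ne_empty.2 (by rintro rfl; exact hS (collinear_empty k P))
  by_contra! h
  apply hS
  rw [collinear_iff_of_mem ha]
  by_cases hb : ∃ b ∈ S, b ≠ a
  · obtain ⟨b, hb, hba⟩ := hb
    refine ⟨b -ᵥ a, fun p hp => ?_⟩
    have hp' : p ∈ line[k, a, b] :=
      (h a ha b hb p hp).mem_affineSpan_of_mem_of_ne (by simp) (by simp) (by simp) hba.symm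
    obtain ⟨r, rfl⟩ := mem_affineSpan_pair_iff_exists_lineMap_eq.1 hp'
    exact ⟨r, lineMap_apply a b r⟩
  · push Not at hb
    exact ⟨0, fun p hp => ⟨0, by simp [hb p hp]⟩⟩

def cross (a b c : ℝ × ℝ) : ℝ :=
  (b.1 - a.1) * (c.2 - a.2) - (b.2 - a.2) * (c.1 - a.1)

def sqDist (a b : ℝ × ℝ) : ℝ := (b.1 - a.1) ^ 2 + (b.2 - a.2) ^ 2

/-- `lineMap a b (footParam a b c)` is the foot of the perpendicular from `c` to the line `ab`. -/
noncomputable def footParam (a b c : ℝ × ℝ) : ℝ :=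
  ((c.1 - a.1) * (b.1 - a.1) + (c.2 - a.2) * (b.2 - a.2)) / sqDist a b

noncomputable def lineSqDist (a b c : ℝ × ℝ) : ℝ := cross a b c ^ 2 / sqDist a b

theorem sqDist_pos {a b : ℝ × ℝ} (h : a ≠ b) : 0 < sqDist a b := by
  have : b.1 - a.1 ≠ 0 ∨ b.2 - a.2 ≠ 0 := by
    by_contra! h'
    exact h (Prod.ext (by linarith [h'.1]) (by linarith [h'.2]))
  unfold sqDist
  rcases this with h' | h' <;> positivity

theorem ne_of_cross_ne_zero {a b c : ℝ × ℝ} (h : cross a b c ≠ 0) : a ≠ b := by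
  rintro rfl
  simp [cross] at h

theorem cross_lineMap_lineMap (a b c : ℝ × ℝ) (p q : ℝ) :
    cross c (lineMap a b q) (lineMap a b p) = (p - q) * cross a b c := by
  simp only [cross, fst_lineMap, snd_lineMap, lineMap_apply_ring']; ring

theorem cross_eq_zero_iff_exists_lineMap_eq {a b c : ℝ × ℝ} (hab : a ≠ b) :
    cross a b c = 0 ↔ ∃ r : ℝ, lineMap a b r = c := by
  have hn := (sqDist_pos hab).ne'
  constructor
  · intro h
    unfold cross at h
    refine ⟨footParam a b c, Prod.ext ?_ ?_⟩
    · simp only [footParam, fst_lineMap, lineMap_apply_ring', sqDist] at hn ⊢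
      field_simp
      linear_combination (b.2 - a.2) * h
    · simp only [footParam, snd_lineMap, lineMap_apply_ring', sqDist] at hn ⊢
      field_simp
      linear_combination (a.1 - b.1) * h
  · rintro ⟨r, rfl⟩
    simp only [cross, fst_lineMap, snd_lineMap, lineMap_apply_ring']; ring

theorem collinear_iff_cross_eq_zero {a b c : ℝ × ℝ} :
    Collinear ℝ ({a, b, c} : Set (ℝ × ℝ)) ↔ cross a b c = 0 := by
  rcases eq_or_ne a b with rfl | hab
  · simp [cross, collinear_pair]
  rw [cross_eq_zero_iff_exists_lineMap_eq hab, ← mem_affineSpan_pair_iff_exists_lineMap_eq]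
  refine ⟨fun h => h.mem_affineSpan_of_mem_of_ne (by simp) (by simp) (by simp) hab, fun h => ?_⟩
  rw [Set.pair_comm, Set.insert_comm]
  exact collinear_insert_of_mem_affineSpan_pair h

theorem sqDist_lineMap {a b : ℝ × ℝ} (hab : a ≠ b) (c : ℝ × ℝ) (q : ℝ) :
    sqDist c (lineMap a b q) = lineSqDist a b c + sqDist a b * (q - footParam a b c) ^ 2 := by
  have hn := (sqDist_pos hab).ne'
  simp only [sqDist, lineSqDist, footParam, cross, fst_lineMap, snd_lineMap,
    lineMap_apply_ring'] at hn ⊢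
  field_simp
  ring

theorem lineSqDist_lineMap_lt {a b c : ℝ × ℝ} (habc : cross a b c ≠ 0) {p q : ℝ}
    (h : (q - p) ^ 2 ≤ (q - footParam a b c) ^ 2) :
    lineSqDist c (lineMap a b q) (lineMap a b p) < lineSqDist a b c := by
  have hab := ne_of_cross_ne_zero habc
  have hn := sqDist_pos hab
  have hL : 0 < lineSqDist a b c := div_pos (by positivity) hn
  rw [lineSqDist, cross_lineMap_lineMap, sqDist_lineMap hab, div_lt_iff₀ (by positivity)]
  calc ((p - q) * cross a b c) ^ 2 = lineSqDist a b c * (sqDist a b * (q - p) ^ 2) := by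
        rw [lineSqDist]; field_simp; ring
    _ ≤ lineSqDist a b c * (sqDist a b * (q - footParam a b c) ^ 2) := by gcongr
    _ < lineSqDist a b c * (lineSqDist a b c + sqDist a b * (q - footParam a b c) ^ 2) := by
        gcongr; linarith

theorem sq_sub_le_or_sq_sub_le_of_mul_nonneg {t u v : ℝ} (h : 0 ≤ (u - t) * (v - t)) :
    (v - u) ^ 2 ≤ (v - t) ^ 2 ∨ (u - v) ^ 2 ≤ (u - t) ^ 2 := by
  rcases le_total ((u - t) ^ 2) ((v - t) ^ 2) with h' | h'
  · left; nlinarith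
  · right; nlinarith

theorem zero_le_sub_mul_sub_or (t x y z : ℝ) :
    0 ≤ (x - t) * (y - t) ∨ 0 ≤ (x - t) * (z - t) ∨ 0 ≤ (y - t) * (z - t) := by
  by_contra! h
  nlinarith [mul_pos_of_neg_of_neg h.1 h.2.1, sq_nonneg ((x - t) * (y - t) * (z - t))]

theorem exists_pair_sq_sub_le (t : ℝ) {x y z : ℝ} (hxy : x ≠ y) (hxz : x ≠ z) (hyz : y ≠ z) :
    ∃ p ∈ ({x, y, z} : Set ℝ), ∃ q ∈ ({x, y, z} : Set ℝ), p ≠ q ∧ (q - p) ^ 2 ≤ (q - t) ^ 2 := by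
  rcases zero_le_sub_mul_sub_or t x y z with h | h | h <;>
    rcases sq_sub_le_or_sq_sub_le_of_mul_nonneg h with h' | h'
  exacts [⟨x, by simp, y, by simp, hxy, h'⟩, ⟨y, by simp, x, by simp, hxy.symm, h'⟩,
    ⟨x, by simp, z, by simp, hxz, h'⟩, ⟨z, by simp, x, by simp, hxz.symm, h'⟩,
    ⟨y, by simp, z, by simp, hyz, h'⟩, ⟨z, by simp, y, by simp, hyz.symm, h'⟩]

theorem exists_min_lineSqDist {S : Set (ℝ × ℝ)} (hfin : S.Finite) (hS : ¬ Collinear ℝ S) :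
    ∃ a ∈ S, ∃ b ∈ S, ∃ c ∈ S, cross a b c ≠ 0 ∧ ∀ a' ∈ S, ∀ b' ∈ S, ∀ c' ∈ S,
      cross a' b' c' ≠ 0 → lineSqDist a b c ≤ lineSqDist a' b' c' := by
  obtain ⟨a, ha, b, hb, c, hc, habc⟩ := exists_not_collinear_triple hS
  let T := {t : (ℝ × ℝ) × (ℝ × ℝ) × (ℝ × ℝ) |
    t.1 ∈ S ∧ t.2.1 ∈ S ∧ t.2.2 ∈ S ∧ cross t.1 t.2.1 t.2.2 ≠ 0}
  have hT : T.Finite := (hfin.prod (hfin.prod hfin)).subset fun t ht => ⟨ht.1, ht.2.1, ht.2.2.1⟩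
  obtain ⟨⟨a, b, c⟩, ⟨ha, hb, hc, habc⟩, hmin⟩ := Set.exists_min_image T
    (fun t => lineSqDist t.1 t.2.1 t.2.2) hT
    ⟨(a, b, c), ha, hb, hc, mt collinear_iff_cross_eq_zero.2 habc⟩
  exact ⟨a, ha, b, hb, c, hc, habc,
    fun a' ha' b' hb' c' hc' h' => hmin (a', b', c') ⟨ha', hb', hc', h'⟩⟩

/-- Sylvester–Gallai theorem. -/
theorem stmt1 (S : Set (ℝ × ℝ)) (hfin : S.Finite) (hS : ¬ Collinear ℝ S) :
    ∃ a ∈ S, ∃ b ∈ S, a ≠ b ∧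
      ∀ c ∈ S, Collinear ℝ ({a, b, c} : Set (ℝ × ℝ)) → c = a ∨ c = b := by
  obtain ⟨a, ha, b, hb, c, hc, habc, hmin⟩ := exists_min_lineSqDist hfin hS
  have hab := ne_of_cross_ne_zero habc
  refine ⟨a, ha, b, hb, hab, fun x hx hcol => ?_⟩
  by_contra! hxab
  obtain ⟨s, rfl⟩ :=
    (cross_eq_zero_iff_exists_lineMap_eq hab).1 (collinear_iff_cross_eq_zero.1 hcol)
  have hs0 : (0 : ℝ) ≠ s := by rintro rfl; simp at hxab
  have hs1 : (1 : ℝ) ≠ s := by rintro rfl; simp at hxab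
  obtain ⟨p, hp, q, hq, hpq, hle⟩ := exists_pair_sq_sub_le (footParam a b c) zero_ne_one hs0 hs1
  have hmem : ∀ r ∈ ({0, 1, s} : Set ℝ), lineMap a b r ∈ S := by
    rintro r (rfl | rfl | rfl) <;> simpa
  have hcQP : cross c (lineMap a b q) (lineMap a b p) ≠ 0 := by
    rw [cross_lineMap_lineMap]
    exact mul_ne_zero (sub_ne_zero.2 hpq) habc
  exact (hmin c hc _ (hmem q hq) _ (hmem p hp) hcQP).not_gt (lineSqDist_lineMap_lt habc hle)
end

section
/- Let S be a finite set of points in ℝ² with no 4 collinear, and let x, y ∈ S be distinct points such that the line through x and y contains no other point of S. Then there exists a point z in the open segment between x and y such that the only collinear triple in S ∪ {z} containing z is {x, z, y}. -/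
/-!
Two distinct points of the line `xy` that are both collinear with a pair `a ≠ b` force the line
`ab` to be the line `xy`. So each pair of points of `S` other than `{x, y}` meets the line `xy`
in at most one point, only finitely many points of the infinite open segment are excluded, and
any remaining point `z` works.
-/

section AffineSpace

variable {k V P : Type*} [Field k] [AddCommGroup V] [Module k V] [AddTorsor V P]

theorem subsingleton_setOf_mem_affineSpan_pair_collinear {x y a b : P} (hab : a ≠ b)
    (hoff : ¬(a ∈ line[k, x, y] ∧ b ∈ line[k, x, y])) :
    {z | z ∈ line[k, x, y] ∧ Collinear k ({a, b, z} : Set P)}.Subsingleton := by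
  rintro z₁ ⟨hz₁, hcol₁⟩ z₂ ⟨hz₂, hcol₂⟩
  by_contra hz
  have hcol : Collinear k ({z₁, z₂, a, b} : Set P) :=
    collinear_insert_insert_of_mem_affineSpan_pair
      (hcol₁.mem_affineSpan_of_mem_of_ne (by simp) (by simp) (by simp) hab)
      (hcol₂.mem_affineSpan_of_mem_of_ne (by simp) (by simp) (by simp) hab)
  have hle : line[k, z₁, z₂] ≤ line[k, x, y] := affineSpan_pair_le_of_mem_of_mem hz₁ hz₂
  exact hoff ⟨hle (hcol.mem_affineSpan_of_mem_of_ne (by simp) (by simp) (by simp) hz),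
    hle (hcol.mem_affineSpan_of_mem_of_ne (by simp) (by simp) (by simp) hz)⟩

theorem Set.Finite.setOf_mem_affineSpan_pair_collinear {S : Set P} (hS : S.Finite) (x y : P) :
    {z | z ∈ line[k, x, y] ∧ ∃ a ∈ S, ∃ b ∈ S, a ≠ b ∧
      ¬(a ∈ line[k, x, y] ∧ b ∈ line[k, x, y]) ∧ Collinear k ({a, b, z} : Set P)}.Finite := by
  have hpair : ∀ a b : P, {z | z ∈ line[k, x, y] ∧ a ≠ b ∧
      ¬(a ∈ line[k, x, y] ∧ b ∈ line[k, x, y]) ∧ Collinear k ({a, b, z} : Set P)}.Subsingleton := by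
    rintro a b z₁ ⟨hz₁, hab, hoff, hcol₁⟩ z₂ ⟨hz₂, -, -, hcol₂⟩
    exact subsingleton_setOf_mem_affineSpan_pair_collinear hab hoff ⟨hz₁, hcol₁⟩ ⟨hz₂, hcol₂⟩
  refine (hS.biUnion fun a _ => hS.biUnion fun b _ => (hpair a b).finite).subset ?_
  rintro z ⟨hz, a, ha, b, hb, hab, hoff, hcol⟩
  exact Set.mem_biUnion ha (Set.mem_biUnion hb ⟨hz, hab, hoff, hcol⟩)

end AffineSpace

section OrderedField

variable {k E : Type*} [Field k] [LinearOrder k] [AddCommGroup E] [Module k E]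

theorem openSegment_subset_affineSpan_pair (x y : E) :
    openSegment k x y ⊆ (line[k, x, y] : Set E) :=
  (line[k, x, y]).convex.openSegment_subset (left_mem_affineSpan_pair k x y)
    (right_mem_affineSpan_pair k x y)

theorem openSegment_infinite [IsStrictOrderedRing k] {x y : E} (hxy : x ≠ y) :
    (openSegment k x y).Infinite := by
  rw [openSegment_eq_image_lineMap]
  exact (Set.Ioo_infinite zero_lt_one).image (AffineMap.lineMap_injective k hxy).injOn

end OrderedField

theorem stmt2_general (S : Set (ℝ × ℝ)) (hfin : S.Finite)
    (x y : ℝ × ℝ) (hxy : x ≠ y)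
    (hline : ∀ c ∈ S, Collinear ℝ ({x, y, c} : Set (ℝ × ℝ)) → c = x ∨ c = y) :
    ∃ z ∈ openSegment ℝ x y,
      ∀ a ∈ S ∪ {z}, ∀ b ∈ S ∪ {z}, a ≠ b → a ≠ z → b ≠ z →
        Collinear ℝ ({a, b, z} : Set (ℝ × ℝ)) → ({a, b} : Set (ℝ × ℝ)) = {x, y} := by
  obtain ⟨z, hz, hzfree⟩ := ((openSegment_infinite (k := ℝ) hxy).sdiff
    (hfin.setOf_mem_affineSpan_pair_collinear (k := ℝ) x y)).nonempty
  refine ⟨z, hz, fun a ha b hb hab haz hbz hcol => ?_⟩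
  have haS : a ∈ S := ha.resolve_right haz
  have hbS : b ∈ S := hb.resolve_right hbz
  have hon : a ∈ line[ℝ, x, y] ∧ b ∈ line[ℝ, x, y] := by
    by_contra hoff
    exact hzfree ⟨openSegment_subset_affineSpan_pair x y hz, a, haS, b, hbS, hab, hoff, hcol⟩
  have hxyc : ∀ c ∈ S, c ∈ line[ℝ, x, y] → c = x ∨ c = y := fun c hc hcl =>
    hline c hc ((collinear_insert_of_mem_affineSpan_pair hcl).subset
      (by simp [Set.insert_subset_iff]))
  rcases hxyc a haS hon.1 with rfl | rfl <;> rcases hxyc b hbS hon.2 with rfl | rfl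
  · exact absurd rfl hab
  · rfl
  · exact Set.pair_comm _ _
  · exact absurd rfl hab

theorem stmt2 (S : Set (ℝ × ℝ)) (hfin : S.Finite) (h4 : No4Collinear S)
    (x y : ℝ × ℝ) (hx : x ∈ S) (hy : y ∈ S) (hxy : x ≠ y)
    (hline : ∀ c ∈ S, Collinear ℝ ({x, y, c} : Set (ℝ × ℝ)) → c = x ∨ c = y) :
    ∃ z ∈ openSegment ℝ x y,
      ∀ a ∈ S ∪ {z}, ∀ b ∈ S ∪ {z}, a ≠ b → a ≠ z → b ≠ z →
        Collinear ℝ ({a, b, z} : Set (ℝ × ℝ)) → ({a, b} : Set (ℝ × ℝ)) = {x, y} :=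
  stmt2_general S hfin x y hxy hline
end

section
/- Suppose (xₙ) is a sequence of distinct points in ℝ², P = {xₙ : n ∈ ℕ}, such that for every pair i < k, if xᵢ and xₖ are visible with respect to P then there exists i' < k with xᵢ, x_{i'}, xₖ collinear and xₖ strictly between xᵢ and x_{i'}. Suppose further that for every k, xₖ lies in at most one collinear triple among {x₁, …, xₖ}. Then no 3 points of P are pairwise visible. -/
/-!
Sort a pairwise visible triple as `xᵢ, xⱼ, xₖ` with `i < j < k`. The first hypothesis puts `xₖ`
strictly inside segments `[xᵢ, xᵢ']` and `[xⱼ, xⱼ']` with `i', j' < k`; both give collinear triples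
containing `xₖ`, so by the second hypothesis they are the same pair. As `xᵢ ≠ xⱼ`, this forces
`xᵢ' = xⱼ`, so `xₖ` lies strictly between `xᵢ` and `xⱼ`, which are therefore not visible.
-/

theorem ne_of_mem_openSegment {𝕜 E : Type*} [Field 𝕜] [LinearOrder 𝕜] [IsStrictOrderedRing 𝕜]
    [AddCommGroup E] [Module 𝕜 E] {v w u : E} (hvw : v ≠ w) (h : w ∈ openSegment 𝕜 v u) :
    v ≠ u ∧ u ≠ w := by
  refine ⟨?_, ?_⟩ <;> rintro rfl
  · rw [openSegment_same] at h
    exact hvw h.symm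
  · exact hvw (right_mem_openSegment_iff.1 h)

theorem mem_openSegment_of_pair_eq {𝕜 E : Type*} [Semiring 𝕜] [PartialOrder 𝕜]
    [AddCommMonoid E] [SMul 𝕜 E] {a a' b b' c : E} (hab : a ≠ b)
    (hc : c ∈ openSegment 𝕜 a a') (h : ({a, a'} : Set E) = {b, b'}) :
    c ∈ openSegment 𝕜 a b := by
  rcases Set.pair_eq_pair_iff.1 h with ⟨hab', -⟩ | ⟨-, rfl⟩
  · exact absurd hab' hab
  · exact hc

theorem Visible.symm {P : Set (ℝ × ℝ)} {v w : ℝ × ℝ} (h : Visible P v w) : Visible P w v :=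
  ⟨h.1.symm, fun p hp => openSegment_symm ℝ v w ▸ h.2 p hp⟩

theorem not_triangle_of_not_sorted_triangle {α : Type*} [LinearOrder α] {R : α → α → Prop}
    (hsymm : ∀ a b, R a b → R b a) (hirr : ∀ a, ¬ R a a)
    (hsorted : ∀ a b c, a < b → b < c → ¬ (R a b ∧ R a c ∧ R b c)) (a b c : α) :
    ¬ (R a b ∧ R a c ∧ R b c) := by
  rintro ⟨hab, hac, hbc⟩
  wlog hlt₁ : a < b generalizing a b c
  · exact this b a c (hsymm _ _ hab) hbc hac <|
      (not_lt.1 hlt₁).lt_of_ne fun h => hirr a (h ▸ hab)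
  wlog hlt₂ : b < c generalizing a b c
  · have hcb : c < b := (not_lt.1 hlt₂).lt_of_ne fun h => hirr b (h ▸ hbc)
    rcases lt_or_gt_of_ne fun h : a = c => hirr a (h ▸ hac) with hac' | hca
    · exact this a c b hac hab (hsymm _ _ hbc) hac' hcb
    · exact this c a b (hsymm _ _ hac) (hsymm _ _ hbc) hab hca hlt₁
  exact hsorted a b c hlt₁ hlt₂ ⟨hab, hac, hbc⟩

theorem not_visible_triangle_of_lt (x : ℕ → ℝ × ℝ) (P : Set (ℝ × ℝ)) (hxP : ∀ n, x n ∈ P)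
    (hA : ∀ i k : ℕ, i < k → Visible P (x i) (x k) →
      ∃ i' < k, Collinear ℝ ({x i, x i', x k} : Set (ℝ × ℝ)) ∧
        x k ∈ openSegment ℝ (x i) (x i'))
    (hB : ∀ k i j i' j' : ℕ, i ≤ k → j ≤ k → i' ≤ k → j' ≤ k →
      i ≠ j → i ≠ k → j ≠ k → i' ≠ j' → i' ≠ k → j' ≠ k →
      Collinear ℝ ({x i, x j, x k} : Set (ℝ × ℝ)) →
      Collinear ℝ ({x i', x j', x k} : Set (ℝ × ℝ)) →
      ({x i, x j} : Set (ℝ × ℝ)) = {x i', x j'})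
    {i j k : ℕ} (hij : i < j) (hjk : j < k) :
    ¬ (Visible P (x i) (x j) ∧ Visible P (x i) (x k) ∧ Visible P (x j) (x k)) := by
  rintro ⟨vij, vik, vjk⟩
  have hik := hij.trans hjk
  obtain ⟨i', hi'k, hcol_i, hseg_i⟩ := hA i k hik vik
  obtain ⟨j', hj'k, hcol_j, hseg_j⟩ := hA j k hjk vjk
  obtain ⟨hii', hi'k'⟩ := ne_of_mem_openSegment vik.1 hseg_i
  obtain ⟨hjj', hj'k'⟩ := ne_of_mem_openSegment vjk.1 hseg_j
  have hpair := hB k i i' j j' hik.le hi'k.le hjk.le hj'k.le (ne_of_apply_ne x hii') hik.ne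
    (ne_of_apply_ne x hi'k') (ne_of_apply_ne x hjj') hjk.ne (ne_of_apply_ne x hj'k') hcol_i hcol_j
  exact vij.2 (x k) (hxP k) (mem_openSegment_of_pair_eq vij.1 hseg_i hpair)

theorem stmt7_general (x : ℕ → ℝ × ℝ)
    (P : Set (ℝ × ℝ)) (hP : P = Set.range x)
    (hA : ∀ i k : ℕ, i < k → Visible P (x i) (x k) →
      ∃ i' < k, Collinear ℝ ({x i, x i', x k} : Set (ℝ × ℝ)) ∧
        x k ∈ openSegment ℝ (x i) (x i'))
    (hB : ∀ k i j i' j' : ℕ, i ≤ k → j ≤ k → i' ≤ k → j' ≤ k →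
      i ≠ j → i ≠ k → j ≠ k → i' ≠ j' → i' ≠ k → j' ≠ k →
      Collinear ℝ ({x i, x j, x k} : Set (ℝ × ℝ)) →
      Collinear ℝ ({x i', x j', x k} : Set (ℝ × ℝ)) →
      ({x i, x j} : Set (ℝ × ℝ)) = {x i', x j'}) :
    ¬ ∃ a ∈ P, ∃ b ∈ P, ∃ c ∈ P,
      Visible P a b ∧ Visible P a c ∧ Visible P b c := by
  subst hP
  rintro ⟨_, ⟨a, rfl⟩, _, ⟨b, rfl⟩, _, ⟨c, rfl⟩, hvis⟩
  exact not_triangle_of_not_sorted_triangle (R := fun m n => Visible (Set.range x) (x m) (x n))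
    (fun _ _ h => h.symm) (fun _ h => h.1 rfl)
    (fun _ _ _ => not_visible_triangle_of_lt x _ Set.mem_range_self hA hB) a b c hvis

theorem stmt7 (x : ℕ → ℝ × ℝ) (hinj : Function.Injective x)
    (P : Set (ℝ × ℝ)) (hP : P = Set.range x)
    (hA : ∀ i k : ℕ, i < k → Visible P (x i) (x k) →
      ∃ i' < k, Collinear ℝ ({x i, x i', x k} : Set (ℝ × ℝ)) ∧
        x k ∈ openSegment ℝ (x i) (x i'))
    (hB : ∀ k i j i' j' : ℕ, i ≤ k → j ≤ k → i' ≤ k → j' ≤ k →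
      i ≠ j → i ≠ k → j ≠ k → i' ≠ j' → i' ≠ k → j' ≠ k →
      Collinear ℝ ({x i, x j, x k} : Set (ℝ × ℝ)) →
      Collinear ℝ ({x i', x j', x k} : Set (ℝ × ℝ)) →
      ({x i, x j} : Set (ℝ × ℝ)) = {x i', x j'}) :
    ¬ ∃ a ∈ P, ∃ b ∈ P, ∃ c ∈ P,
      Visible P a b ∧ Visible P a c ∧ Visible P b c :=
  stmt7_general x P hP hA hB
end

section
/- There exists an infinite set P ⊆ ℝ² with no 4 collinear points such that P contains no 6 pairwise visible points. -/
open Set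

section Geometry

variable {V : Type*} [AddCommGroup V] [Module ℝ V]

theorem collinear_of_mem_openSegment {x y p : V} (hp : p ∈ openSegment ℝ x y) :
    Collinear ℝ {x, y, p} := by
  have := (mem_segment_iff_wbtw.1 (openSegment_subset_segment ℝ x y hp)).mem_affineSpan
  exact (collinear_insert_of_mem_affineSpan_pair this).subset (by intro; simp; tauto)

theorem collinear_of_two_common_points {u v x y p q : V} (huv : u ≠ v) (hxy : x ≠ y)
    (hpq : p ≠ q) (hp : Collinear ℝ {u, v, p}) (hq : Collinear ℝ {u, v, q})
    (hp' : Collinear ℝ {x, y, p}) (hq' : Collinear ℝ {x, y, q}) : Collinear ℝ {x, y, u, v} := by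
  have hline : line[ℝ, p, q] ≤ line[ℝ, u, v] := affineSpan_pair_le_of_mem_of_mem
    (hp.mem_affineSpan_of_mem_of_ne (by simp) (by simp) (by simp) huv)
    (hq.mem_affineSpan_of_mem_of_ne (by simp) (by simp) (by simp) huv)
  have hpqxy : Collinear ℝ {p, q, x, y} := collinear_insert_insert_of_mem_affineSpan_pair
    (hp'.mem_affineSpan_of_mem_of_ne (by simp) (by simp) (by simp) hxy)
    (hq'.mem_affineSpan_of_mem_of_ne (by simp) (by simp) (by simp) hxy)
  exact collinear_insert_insert_of_mem_affineSpan_pair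
    (hline (hpqxy.mem_affineSpan_of_mem_of_ne (by simp) (by simp) (by simp) hpq))
    (hline (hpqxy.mem_affineSpan_of_mem_of_ne (by simp) (by simp) (by simp) hpq))

theorem infinite_openSegment {x y : V} (h : x ≠ y) : (openSegment ℝ x y).Infinite := by
  rw [openSegment_eq_image_lineMap]
  exact (Ioo_infinite zero_lt_one).image (AffineMap.lineMap_injective ℝ h).injOn

theorem exists_mem_openSegment_forall_collinear {S : Set V} (hS : S.Finite) {x y : V}
    (hxy : x ≠ y) : ∃ p ∈ openSegment ℝ x y, ∀ u ∈ S, ∀ v ∈ S, u ≠ v →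
      Collinear ℝ {u, v, p} → Collinear ℝ {x, y, u, v} := by
  set bad : Set V := ⋃ uv ∈ (S ×ˢ S) ∩ {uv | uv.1 ≠ uv.2 ∧ ¬ Collinear ℝ {x, y, uv.1, uv.2}},
    openSegment ℝ x y ∩ {p | Collinear ℝ {uv.1, uv.2, p}}
  have hbad : bad.Finite := by
    refine ((hS.prod hS).inter_of_left _).biUnion fun uv ⟨_, huv, hcol⟩ => ?_
    refine Subsingleton.finite fun p hp q hq => ?_
    by_contra hpq
    exact hcol (collinear_of_two_common_points huv hxy hpq hp.2 hq.2
      (collinear_of_mem_openSegment hp.1) (collinear_of_mem_openSegment hq.1))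
  obtain ⟨p, hp, hpbad⟩ := (infinite_openSegment hxy).exists_notMem_finite hbad
  refine ⟨p, hp, fun u hu v hv huv hcol => ?_⟩
  by_contra h
  exact hpbad (mem_biUnion (x := (u, v)) ⟨⟨hu, hv⟩, huv, h⟩ ⟨hp, hcol⟩)

/-- `p` lies on at most one line through two points of `S`; on it, `p` lies strictly between
the only two points of `S`. -/
structure WellPlaced (S : Set V) (p : V) : Prop where
  notMem : p ∉ S
  mem_openSegment : ∀ ⦃u v⦄, u ∈ S → v ∈ S → u ≠ v → Collinear ℝ {u, v, p} →
    p ∈ openSegment ℝ u v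
  eq_or_eq : ∀ ⦃u v w w'⦄, u ∈ S → v ∈ S → w ∈ S → w' ∈ S → u ≠ v → w ≠ w' →
    Collinear ℝ {u, v, p} → Collinear ℝ {w, w', p} → w = u ∨ w = v

def IsOrdinaryPair (S : Set V) (x y : V) : Prop :=
  x ∈ S ∧ y ∈ S ∧ x ≠ y ∧ ∀ w ∈ S, Collinear ℝ {x, y, w} → w = x ∨ w = y

theorem IsOrdinaryPair.exists_wellPlaced {S : Set V} (hS : S.Finite) {x y : V}
    (h : IsOrdinaryPair S x y) : ∃ p ∈ openSegment ℝ x y, WellPlaced S p := by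
  obtain ⟨hx, hy, hxy, hline⟩ := h
  obtain ⟨p, hp, hpS⟩ := exists_mem_openSegment_forall_collinear hS hxy
  have hpx : p ≠ x := fun h => hxy (left_mem_openSegment_iff.1 (h ▸ hp))
  have hpy : p ≠ y := fun h => hxy (right_mem_openSegment_iff.1 (h ▸ hp))
  have hpair : ∀ ⦃u v⦄, u ∈ S → v ∈ S → u ≠ v → Collinear ℝ {u, v, p} →
      (u = x ∧ v = y) ∨ (u = y ∧ v = x) := by
    intro u v hu hv huv hcol
    have h4 := hpS u hu v hv huv hcol
    have hu' := hline u hu (h4.subset (by intro; simp; tauto))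
    have hv' := hline v hv (h4.subset (by intro; simp; tauto))
    rcases hu' with rfl | rfl <;> rcases hv' with rfl | rfl <;> simp_all
  refine ⟨p, hp, fun hpS' => ?_, fun u v hu hv huv hcol => ?_,
    fun u v w w' hu hv hw hw' huv hww' hcol hcol' => ?_⟩
  · rcases hline p hpS' (collinear_of_mem_openSegment hp) with h | h <;> contradiction
  · rcases hpair hu hv huv hcol with ⟨rfl, rfl⟩ | ⟨rfl, rfl⟩
    · exact hp
    · exact openSegment_symm ℝ u v ▸ hp
  · rcases hpair hu hv huv hcol with ⟨rfl, rfl⟩ | ⟨rfl, rfl⟩ <;>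
      rcases hpair hw hw' hww' hcol' with ⟨rfl, rfl⟩ | ⟨rfl, rfl⟩ <;> simp

theorem exists_wellPlaced_of_forall_not_collinear {S : Set V} (hS : S.Finite) {x y : V}
    (hxy : x ≠ y) (hline : ∀ w ∈ S, ¬ Collinear ℝ {x, y, w}) : ∃ p, WellPlaced S p := by
  obtain ⟨p, hp, hpS⟩ := exists_mem_openSegment_forall_collinear hS hxy
  have hnot : ∀ ⦃u v⦄, u ∈ S → v ∈ S → u ≠ v → ¬ Collinear ℝ {u, v, p} :=
    fun u v hu hv huv hcol => hline u hu ((hpS u hu v hv huv hcol).subset (by intro; simp; tauto))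
  exact ⟨p, fun hpS' => hline p hpS' (collinear_of_mem_openSegment hp),
    fun u v hu hv huv hcol => (hnot hu hv huv hcol).elim,
    fun u v _ _ hu hv _ _ huv _ hcol _ => (hnot hu hv huv hcol).elim⟩

end Geometry

theorem exists_latest_mem {α : Type*} {a : ℕ → α} {T : Finset α} (hT : ↑T ⊆ range a)
    (hne : T.Nonempty) : ∃ n, a n ∈ T ∧ ∀ q ∈ T, q ≠ a n → q ∈ a '' Iio n := by
  have hinv : ∀ q ∈ T, a (Function.invFun a q) = q := fun q hq => Function.invFun_eq (hT hq)
  obtain ⟨m, hm, hmax⟩ := T.exists_max_image (Function.invFun a) hne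
  refine ⟨Function.invFun a m, (hinv m hm).symm ▸ hm, fun q hqT hqm => ?_⟩
  refine ⟨Function.invFun a q, lt_of_le_of_ne (hmax q hqT) fun h => ?_, hinv q hqT⟩
  exact hqm (by rw [← hinv q hqT, h])

section WellPlacedSequence

variable {V : Type*} [AddCommGroup V] [Module ℝ V] {a : ℕ → V}
  (ha : ∀ n, WellPlaced (a '' Iio n) (a n))
include ha

theorem injective_of_wellPlaced : Function.Injective a := by
  intro i j hij
  by_contra hne
  rcases Nat.lt_or_gt_of_ne hne with h | h
  · exact (ha j).notMem ⟨i, h, hij⟩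
  · exact (ha i).notMem ⟨j, h, hij.symm⟩

theorem card_le_three_of_collinear {T : Finset V} (hT : ↑T ⊆ range a)
    (hcol : Collinear ℝ (T : Set V)) : T.card ≤ 3 := by
  classical
  by_contra! hcard
  obtain ⟨n, hn, hlt⟩ := exists_latest_mem hT (Finset.card_pos.1 (by omega))
  obtain ⟨x, hx, y, hy, z, hz, hxy, hxz, hyz⟩ := Finset.two_lt_card.1
    (show 2 < (T.erase (a n)).card by rw [Finset.card_erase_of_mem hn]; omega)
  simp only [Finset.mem_erase] at hx hy hz
  have hsub : ∀ u ∈ T, ∀ v ∈ T, Collinear ℝ {u, v, a n} :=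
    fun u hu v hv => hcol.subset <| by simp [insert_subset_iff, hu, hv, hn]
  rcases (ha n).eq_or_eq (hlt x hx.2 hx.1) (hlt y hy.2 hy.1) (hlt z hz.2 hz.1) (hlt x hx.2 hx.1)
    hxy (Ne.symm hxz) (hsub x hx.2 y hy.2) (hsub z hz.2 x hx.2) with h | h
  · exact hxz h.symm
  · exact hyz h.symm

end WellPlacedSequence

section Visibility

variable {a : ℕ → ℝ × ℝ} (ha : ∀ n, WellPlaced (a '' Iio n) (a n))
include ha

theorem exists_earlier_collinear_of_visible {k : ℕ} {u q : ℝ × ℝ} (hu : u ∈ a '' Iio k)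
    (hvis : Visible (range a) u (a k)) (hq : q ∈ range a) (hqu : q ≠ u) (hqk : q ≠ a k)
    (hcol : Collinear ℝ {u, a k, q}) : ∃ w ∈ a '' Iio k, w ≠ u ∧ Collinear ℝ {u, w, a k} := by
  obtain ⟨m, rfl⟩ := hq
  have hcol' : Collinear ℝ {u, a m, a k} := by rwa [pair_comm]
  rcases lt_trichotomy m k with hmk | rfl | hkm
  · exact ⟨a m, ⟨m, hmk, rfl⟩, hqu, hcol'⟩
  · exact (hqk rfl).elim
  · obtain ⟨i, hik, rfl⟩ := hu
    exact (hvis.2 (a m) (mem_range_self m) <|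
      (ha m).mem_openSegment ⟨i, hik.trans hkm, rfl⟩ ⟨k, hkm, rfl⟩ hvis.1 hcol).elim

variable (hthird : ∀ i k, Visible (range a) (a i) (a k) →
  ∃ q ∈ range a, q ≠ a i ∧ q ≠ a k ∧ Collinear ℝ {a i, a k, q})
include hthird

theorem not_visible_triangle {k : ℕ} {u v : ℝ × ℝ} (hu : u ∈ a '' Iio k) (hv : v ∈ a '' Iio k)
    (huv : u ≠ v) (huk : Visible (range a) u (a k)) (hvk : Visible (range a) v (a k))
    (hvis : Visible (range a) u v) : False := by
  have hearlier : ∀ x ∈ a '' Iio k, Visible (range a) x (a k) →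
      ∃ w ∈ a '' Iio k, w ≠ x ∧ Collinear ℝ {x, w, a k} := by
    rintro x ⟨i, hik, rfl⟩ hx
    obtain ⟨q, hq, hqi, hqk, hcol⟩ := hthird i k hx
    exact exists_earlier_collinear_of_visible ha ⟨i, hik, rfl⟩ hx hq hqi hqk hcol
  obtain ⟨w, hw, hwu, hcolu⟩ := hearlier u hu huk
  obtain ⟨w', hw', hw'v, hcolv⟩ := hearlier v hv hvk
  obtain rfl : v = w := ((ha k).eq_or_eq hu hw hv hw' hwu.symm hw'v.symm hcolu hcolv).resolve_left
    huv.symm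
  exact hvis.2 (a k) (mem_range_self k) ((ha k).mem_openSegment hu hv huv hcolu)

theorem card_le_two_of_pairwise_visible {T : Finset (ℝ × ℝ)} (hT : ↑T ⊆ range a)
    (hvis : ∀ v ∈ T, ∀ w ∈ T, v ≠ w → Visible (range a) v w) : T.card ≤ 2 := by
  classical
  by_contra! hcard
  obtain ⟨k, hk, hlt⟩ := exists_latest_mem hT (Finset.card_pos.1 (by omega))
  obtain ⟨u, hu, v, hv, huv⟩ := Finset.one_lt_card.1
    (show 1 < (T.erase (a k)).card by rw [Finset.card_erase_of_mem hk]; omega)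
  simp only [Finset.mem_erase] at hu hv
  exact not_visible_triangle ha hthird (hlt u hu.2 hu.1) (hlt v hv.2 hv.1) huv
    (hvis u hu.2 _ hk hu.1) (hvis v hv.2 _ hk hv.1) (hvis u hu.2 v hv.2 huv)

end Visibility

theorem exists_forall_not_collinear {S : Set (ℝ × ℝ)} (hS : S.Finite) :
    ∃ x y : ℝ × ℝ, x ≠ y ∧ ∀ w ∈ S, ¬ Collinear ℝ {x, y, w} := by
  obtain ⟨c, -, hc⟩ := infinite_univ.exists_notMem_finite (hS.image Prod.fst)
  refine ⟨(c, 0), (c, 1), by simp, fun w hw hcol => hc ⟨w, hw, ?_⟩⟩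
  have hw' : w ∈ line[ℝ, ((c, 0) : ℝ × ℝ), (c, 1)] :=
    hcol.mem_affineSpan_of_mem_of_ne (by simp) (by simp) (by simp) (by simp)
  obtain ⟨r, rfl⟩ := mem_affineSpan_pair_iff_exists_lineMap_eq.1 hw'
  simp [AffineMap.lineMap_apply]

theorem exists_wellPlaced {S : Set (ℝ × ℝ)} (hS : S.Finite) (x y : ℝ × ℝ) :
    ∃ p, WellPlaced S p ∧ (IsOrdinaryPair S x y → p ∈ openSegment ℝ x y) := by
  by_cases h : IsOrdinaryPair S x y
  · obtain ⟨p, hp, hwp⟩ := h.exists_wellPlaced hS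
    exact ⟨p, hwp, fun _ => hp⟩
  · obtain ⟨x', y', hne, hline⟩ := exists_forall_not_collinear hS
    obtain ⟨p, hp⟩ := exists_wellPlaced_of_forall_not_collinear hS hne hline
    exact ⟨p, hp, fun h' => (h h').elim⟩

noncomputable def nextPoint (S : Set (ℝ × ℝ)) (x y : ℝ × ℝ) : ℝ × ℝ :=
  Classical.epsilon fun p => WellPlaced S p ∧ (IsOrdinaryPair S x y → p ∈ openSegment ℝ x y)

theorem nextPoint_spec {S : Set (ℝ × ℝ)} (hS : S.Finite) (x y : ℝ × ℝ) :
    WellPlaced S (nextPoint S x y) ∧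
      (IsOrdinaryPair S x y → nextPoint S x y ∈ openSegment ℝ x y) :=
  Classical.epsilon_spec (exists_wellPlaced hS x y)

/-- Step `n + 1` blocks the pair of points indexed by `Nat.unpair n` if their line is still
ordinary; as `i, k ≤ Nat.pair i k`, every pair is served after both of its points exist. -/
noncomputable def greedyPoint : ℕ → ℝ × ℝ
  | 0 => nextPoint ∅ 0 0
  | n + 1 => nextPoint (range fun m : Fin (n + 1) => greedyPoint m)
      (greedyPoint n.unpair.1) (greedyPoint n.unpair.2)
decreasing_by
  · exact m.isLt
  · exact Nat.lt_succ_of_le (Nat.unpair_left_le n)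
  · exact Nat.lt_succ_of_le (Nat.unpair_right_le n)

theorem greedyPoint_succ (n : ℕ) : greedyPoint (n + 1) =
    nextPoint (greedyPoint '' Iio (n + 1)) (greedyPoint n.unpair.1) (greedyPoint n.unpair.2) := by
  rw [greedyPoint, ← Fin.range_val, ← range_comp]
  rfl

theorem greedyPoint_wellPlaced (n : ℕ) : WellPlaced (greedyPoint '' Iio n) (greedyPoint n) := by
  cases n with
  | zero => simpa [greedyPoint] using (nextPoint_spec finite_empty 0 0).1
  | succ n => exact greedyPoint_succ n ▸ (nextPoint_spec ((finite_Iio _).image _) _ _).1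

theorem greedyPoint_exists_collinear_of_visible (i k : ℕ)
    (hvis : Visible (range greedyPoint) (greedyPoint i) (greedyPoint k)) :
    ∃ q ∈ range greedyPoint, q ≠ greedyPoint i ∧ q ≠ greedyPoint k ∧
      Collinear ℝ {greedyPoint i, greedyPoint k, q} := by
  by_contra! h
  set n := Nat.pair i k
  have hord : IsOrdinaryPair (greedyPoint '' Iio (n + 1)) (greedyPoint i) (greedyPoint k) :=
    ⟨⟨i, Nat.lt_succ_of_le (Nat.left_le_pair i k), rfl⟩,
      ⟨k, Nat.lt_succ_of_le (Nat.right_le_pair i k), rfl⟩, hvis.1,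
      fun w ⟨m, _, hm⟩ hcol => by
        by_contra! hw
        exact h w ⟨m, hm⟩ hw.1 hw.2 hcol⟩
  have hstep : greedyPoint (n + 1) =
      nextPoint (greedyPoint '' Iio (n + 1)) (greedyPoint i) (greedyPoint k) := by
    rw [greedyPoint_succ, Nat.unpair_pair]
  exact hvis.2 _ (mem_range_self (n + 1)) <|
    hstep ▸ (nextPoint_spec ((finite_Iio _).image _) _ _).2 hord

theorem stmt10 :
    ∃ P : Set (ℝ × ℝ), P.Infinite ∧ No4Collinear P ∧
      ¬ ∃ T : Finset (ℝ × ℝ), ↑T ⊆ P ∧ T.card = 6 ∧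
        ∀ v ∈ T, ∀ w ∈ T, v ≠ w → Visible P v w := by
  refine ⟨range greedyPoint,
    infinite_range_of_injective (injective_of_wellPlaced greedyPoint_wellPlaced), ?_, ?_⟩
  · intro p hp q hq r hr s hs hpq hpr hps hqr hqs hrs hcol
    have hcard : ({p, q, r, s} : Finset (ℝ × ℝ)).card = 4 := by
      simp [Finset.card_insert_of_notMem, *]
    have := card_le_three_of_collinear greedyPoint_wellPlaced
      (T := {p, q, r, s}) (by simp [insert_subset_iff, *]) (by simpa using hcol)
    omega
  · rintro ⟨T, hTP, hcard, hvis⟩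
    have := card_le_two_of_pairwise_visible greedyPoint_wellPlaced
      greedyPoint_exists_collinear_of_visible hTP hvis
    omega
end
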